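/- arXiv:2409.15607 — 6 statements merged into one kernel-verified Lean document; each statement's English description precedes it below -/
import Mathlib

section
/- If x is a real number that is singular (i.e., for every ε > 0 there exists t₀ > 0 such that for all t ≥ t₀ there exist integers q ≠ 0 and p with |q| ≤ t and |x·q − p| ≤ ε/t), then x is rational. -/
theorem singular_real_is_rational (x : ℝ)
    (h : ∀ ε : ℝ, 0 < ε → ∃ t₀ : ℝ, 0 < t₀ ∧ ∀ t : ℝ, t₀ ≤ t →
      ∃ q : ℤ, q ≠ 0 ∧ ∃ p : ℤ, |(q : ℝ)| ≤ t ∧ |x * q - p| ≤ ε / t) :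
    ∃ r : ℚ, x = r := by
  by_contra hx
  push_neg at hx
  have hirr : ∀ (q : ℤ), q ≠ 0 → ∀ p : ℤ, x * q - p ≠ 0 := by
    intro q hq p hqp
    apply hx ((p : ℚ) / (q : ℚ))
    have hq' : (q : ℝ) ≠ 0 := Int.cast_ne_zero.mpr hq
    push_cast
    field_simp
    linarith [sub_eq_zero.mp hqp]
  obtain ⟨t₀, ht₀, H⟩ := h (1/4) (by norm_num)
  have key : ∀ n : ℕ, ∀ q p : ℤ, ∀ t : ℝ, q.natAbs ≤ n → q ≠ 0 → t₀ ≤ t →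
      |(q : ℝ)| ≤ t → |x * q - p| ≤ (1/4) / t → False := by
    intro n
    induction n using Nat.strong_induction_on with
    | _ n ih =>
      intro q p t hqn hq ht hqt hδ
      have hδpos : 0 < |x * q - p| := abs_pos.mpr (hirr q hq p)
      set δ := |x * q - p| with hδdef
      have htpos : 0 < t := lt_of_lt_of_le ht₀ ht
      have htδ : t * δ ≤ 1/4 := by
        rw [mul_comm]
        exact (le_div_iff₀ htpos).mp hδ
      set t₂ : ℝ := (1/2) / δ with ht₂def
      have ht2t : t ≤ t₂ := by
        rw [ht₂def, le_div_iff₀ hδpos]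
        linarith
      have ht₂ : t₀ ≤ t₂ := le_trans ht ht2t
      obtain ⟨q₂, hq₂0, p₂, hq₂t₂, hδ₂⟩ := H t₂ ht₂
      have ht₂pos : 0 < t₂ := lt_of_lt_of_le ht₀ ht₂
      have hδ₂' : |x * q₂ - p₂| ≤ δ / 2 := by
        have : (1/4 : ℝ) / t₂ = δ / 2 := by
          rw [ht₂def]
          field_simp
          ring
        linarith [hδ₂, this ▸ hδ₂]
      have hq1 : (1 : ℝ) ≤ |(q : ℝ)| := by
        rw [← Int.cast_abs]
        exact_mod_cast Int.one_le_abs hq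
      have hq₂1 : (1 : ℝ) ≤ |(q₂ : ℝ)| := by
        rw [← Int.cast_abs]
        exact_mod_cast Int.one_le_abs hq₂0
      -- cross term
      have hcross : |(q : ℝ) * p₂ - q₂ * p| < 1 := by
        have hrw : (q : ℝ) * p₂ - q₂ * p
            = (q₂ : ℝ) * (x * q - p) - q * (x * q₂ - p₂) := by ring
        calc |(q : ℝ) * p₂ - q₂ * p|
            ≤ |(q₂ : ℝ)| * |x * q - p| + |(q : ℝ)| * |x * q₂ - p₂| := by
              rw [hrw]
              refine le_trans (abs_sub _ _) ?_
              rw [abs_mul, abs_mul]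
          _ ≤ t₂ * δ + t * (δ / 2) := by
              refine add_le_add (mul_le_mul hq₂t₂ le_rfl (abs_nonneg _) (le_of_lt ht₂pos)) ?_
              exact mul_le_mul hqt hδ₂' (abs_nonneg _) (le_of_lt htpos)
          _ < 1 := by
              have h1 : t₂ * δ = 1/2 := by
                rw [ht₂def]; field_simp
              nlinarith
      have hint : q * p₂ - q₂ * p = 0 := by
        have : |q * p₂ - q₂ * p| < 1 := by
          exact_mod_cast (by push_cast; exact hcross : |((q * p₂ - q₂ * p : ℤ) : ℝ)| < 1)
        rw [abs_lt] at this
        omega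
      have heq : (q : ℝ) * (x * q₂ - p₂) = q₂ * (x * q - p) := by
        have h0 : (q : ℝ) * p₂ - q₂ * p = 0 := by
          have := congrArg (fun z : ℤ => (z : ℝ)) hint
          push_cast at this
          linarith
        nlinarith [h0]
      have habs : |(q : ℝ)| * |x * q₂ - p₂| = |(q₂ : ℝ)| * δ := by
        rw [← abs_mul, ← abs_mul, heq]
      have hq₂small : 2 * |(q₂ : ℝ)| ≤ |(q : ℝ)| := by
        have h1 : |(q₂ : ℝ)| * δ ≤ |(q : ℝ)| * (δ / 2) := by
          rw [← habs]
          exact mul_le_mul_of_nonneg_left hδ₂' (abs_nonneg _)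
        nlinarith
      have hnat : 2 * q₂.natAbs ≤ q.natAbs := by
        have : (2 * q₂.natAbs : ℝ) ≤ (q.natAbs : ℝ) := by
          rw [Nat.cast_natAbs, Nat.cast_natAbs] at *
          push_cast
          push_cast at hq₂small
          convert hq₂small using 2 <;> simp [Int.cast_abs]
        exact_mod_cast this
      have hdesc : q₂.natAbs < n := by
        have h1 : 1 ≤ q₂.natAbs := Int.one_le_abs hq₂0 |>.trans_eq (Int.abs_eq_natAbs q₂) |> fun _ => Nat.one_le_iff_ne_zero.mpr (Int.natAbs_ne_zero.mpr hq₂0)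
        omega
      exact ih q₂.natAbs hdesc q₂ p₂ t₂ le_rfl hq₂0 ht₂ hq₂t₂ hδ₂
  obtain ⟨q, hq, p, hqt, hδ⟩ := H t₀ le_rfl
  exact key q.natAbs q p t₀ le_rfl hq le_rfl hqt hδ
end

section
/- Let n ≥ 3 and let N be an affine hyperplane of ℝⁿ. Then the union of all sets M ∩ N, where M ranges over rational affine hyperplanes of ℝⁿ with M ≠ N, is dense in N. -/
theorem rational_hyperplane_sections_dense (n : ℕ) (hn : 3 ≤ n)
    (a : Fin n → ℝ) (ha : a ≠ 0) (b : ℝ) :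
    ∀ x ∈ {y : Fin n → ℝ | ∑ i, a i * y i = b},
      x ∈ closure {y : Fin n → ℝ | (∑ i, a i * y i = b) ∧
        ∃ q : Fin n → ℤ, q ≠ 0 ∧ ∃ p : ℤ,
          {z : Fin n → ℝ | ∑ i, (q i : ℝ) * z i = (p : ℝ)} ≠
            {z : Fin n → ℝ | ∑ i, a i * z i = b} ∧
          ∑ i, (q i : ℝ) * y i = (p : ℝ)} := by
  intro x hx
  simp only [Set.mem_setOf_eq] at hx
  obtain ⟨i0, hi0⟩ := Function.ne_iff.mp ha
  simp only [Pi.zero_apply] at hi0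
  haveI : Nontrivial (Fin n) := Fin.nontrivial_iff_two_le.mpr (by omega)
  obtain ⟨i, hii0⟩ := exists_ne i0
  rw [Metric.mem_closure_iff]
  intro ε hε
  set c : ℝ := 1 + |a i| / |a i0| with hc
  have hc1 : 1 ≤ c := le_add_of_nonneg_right (div_nonneg (abs_nonneg _) (abs_nonneg _))
  have hc0 : 0 < c := lt_of_lt_of_le one_pos hc1
  obtain ⟨k, hk⟩ := exists_nat_gt (c / ε)
  have hk0 : 0 < (k : ℝ) := lt_trans (div_pos hc0 hε) hk
  have hkε : c / k < ε := by
    rw [div_lt_iff₀ hk0]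
    have := (div_lt_iff₀ hε).mp hk
    nlinarith
  set p : ℤ := ⌊(k : ℝ) * x i⌋ with hp
  set r : ℝ := (p : ℝ) / k with hrdef
  have hfl1 : (p : ℝ) ≤ k * x i := Int.floor_le _
  have hfl2 : (k : ℝ) * x i < p + 1 := Int.lt_floor_add_one _
  have hr1 : r ≤ x i := by
    rw [hrdef, div_le_iff₀ hk0]; linarith [mul_comm (x i) ((k:ℝ))]
  have hkne : (k : ℝ) ≠ 0 := ne_of_gt hk0
  have hr2 : x i - r ≤ 1 / k := by
    rw [le_div_iff₀ hk0, hrdef]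
    field_simp
    linarith
  have hrabs : |x i - r| ≤ 1 / k := by
    rw [abs_of_nonneg (by linarith)]; exact hr2
  set t : ℝ := a i * (x i - r) / a i0 with ht
  have htabs : |t| ≤ (|a i| / |a i0|) / k := by
    calc |t| = |a i| * |x i - r| / |a i0| := by rw [ht, abs_div, abs_mul]
    _ ≤ |a i| * (1 / k) / |a i0| := by gcongr
    _ = (|a i| / |a i0|) / k := by ring
  set y : Fin n → ℝ := fun j => x j + (if j = i then r - x i else 0) +
      (if j = i0 then t else 0) with hy
  have hyi : y i = r := by simp [hy, hii0]
  have hyi0 : y i0 = x i0 + t := by simp [hy, hii0.symm, (Ne.symm hii0)]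
  have hsum : ∀ g : Fin n → ℝ, ∑ j, g j * y j =
      (∑ j, g j * x j) + g i * (r - x i) + g i0 * t := by
    intro g
    simp only [hy, mul_add, Finset.sum_add_distrib, mul_ite, mul_zero,
      Finset.sum_ite_eq', Finset.mem_univ, if_true]
  have hay : ∑ j, a j * y j = b := by
    rw [hsum, hx, ht]
    field_simp
    ring
  set q : Fin n → ℤ := fun j => if j = i then (k : ℤ) else 0 with hq
  have hqr : ∀ j, ((q j : ℝ)) = if j = i then (k : ℝ) else 0 := by
    intro j; simp [hq, apply_ite (fun z : ℤ => (z : ℝ))]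
  have hqy : ∀ w : Fin n → ℝ, ∑ j, (q j : ℝ) * w j = k * w i := by
    intro w
    simp only [hqr, ite_mul, zero_mul, Finset.sum_ite_eq', Finset.mem_univ, if_true]
  refine ⟨y, ⟨hay, q, ?_, p, ?_, ?_⟩, ?_⟩
  · intro h
    have h2 := congrFun h i
    simp only [hq, if_pos rfl, Pi.zero_apply] at h2
    exact (by exact_mod_cast hkne : (k : ℤ) ≠ 0) h2
  · -- sets differ
    intro hMN
    set z : Fin n → ℝ := fun j => y j + (if j = i0 then 1 else 0) with hz
    have hzM : ∑ j, (q j : ℝ) * z j = (p : ℝ) := by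
      rw [hqy]
      have : z i = y i := by simp [hz, hii0]
      rw [this, hyi, hrdef]
      field_simp
    have hzN : ∑ j, a j * z j = b + a i0 := by
      have : ∑ j, a j * z j = (∑ j, a j * y j) + a i0 := by
        simp only [hz, mul_add, Finset.sum_add_distrib, mul_ite, mul_zero, mul_one,
          Finset.sum_ite_eq', Finset.mem_univ, if_true]
      rw [this, hay]
    have h1 : z ∈ {z : Fin n → ℝ | ∑ i, (q i : ℝ) * z i = (p : ℝ)} := hzM
    rw [hMN] at h1
    simp only [Set.mem_setOf_eq] at h1
    rw [hzN] at h1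
    exact hi0 (by linarith)
  · rw [hqy, hyi, hrdef]
    field_simp
  · rw [dist_pi_lt_iff hε]
    intro j
    rw [Real.dist_eq]
    rcases eq_or_ne j i with rfl | hji
    · rw [hyi]
      calc |x j - r| ≤ 1 / k := hrabs
      _ ≤ c / k := by gcongr
      _ < ε := hkε
    · by_cases hji0 : j = i0
      · rw [hji0, hyi0]
        have heq : x i0 - (x i0 + t) = -t := by ring
        rw [heq, abs_neg]
        calc |t| ≤ (|a i| / |a i0|) / k := htabs
        _ ≤ c / k := by gcongr; rw [hc]; linarith
        _ < ε := hkε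
      · have : y j = x j := by simp [hy, hji, hji0]
        rw [this]
        simpa using hε
end

section
/- Let B ∈ M_{m,n}(ℚ) and let E_B be the union of all subspaces L_{p,q} = {A : Aq = p} (q ∈ ℤⁿ \ {0}, p ∈ ℤᵐ) containing B. Then the closure of E_B equals B + R_{<n}, where R_{<n} = {C ∈ M_{m,n}(ℝ) : rank C < n}. -/
/-!
If `A q = p = B q` with `q ≠ 0` integral, then `(A - B) q = 0`, so `E_B` lies in
`{A | rank (A - B) < n}`, which is closed as the zero set of `det ((A - B)ᵀ (A - B))`.
Conversely, let `(A - B) v = 0` with `v ≠ 0`. For a nonzero rational vector `u`, the rank-one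
correction `A - (A - B) u uᵀ / ‖u‖²` agrees with `B` on `u`, hence on an integral multiple `q` of
`u` chosen so that `B q` is integral too; it lies in `E_B` and tends to `A` as `u → v`.
-/

open Matrix

theorem exists_int_ne_zero_mul_eq_intCast {ι : Type*} [Finite ι] (x : ι → ℝ)
    (hx : ∀ i, ∃ r : ℚ, x i = r) : ∃ d : ℤ, d ≠ 0 ∧ ∀ i, ∃ z : ℤ, d * x i = z := by
  choose r hr using hx
  obtain ⟨⟨d, hd⟩, hdr⟩ := IsLocalization.exist_integer_multiples_of_finite (nonZeroDivisors ℤ) r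
  refine ⟨d, nonZeroDivisors.ne_zero hd, fun i => ?_⟩
  obtain ⟨z, hz⟩ := hdr i
  refine ⟨z, ?_⟩
  rw [hr, ← Rat.cast_intCast d, ← Rat.cast_mul, ← zsmul_eq_mul, ← hz]
  simp

namespace Matrix

variable {m n K : Type*}

theorem rank_lt_card_iff_exists_mulVec_eq_zero [Fintype m] [Fintype n] [Field K]
    (C : Matrix m n K) : C.rank < Fintype.card n ↔ ∃ v ≠ 0, C *ᵥ v = 0 := by
  have hrank_nullity := C.mulVecLin.finrank_range_add_finrank_ker
  rw [Module.finrank_fintype_fun_eq_card] at hrank_nullity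
  calc C.rank < Fintype.card n ↔ 1 ≤ Module.finrank K (LinearMap.ker C.mulVecLin) := by
        unfold Matrix.rank; omega
    _ ↔ ∃ v ≠ 0, C *ᵥ v = 0 := by
        simp only [Submodule.one_le_finrank_iff, Submodule.ne_bot_iff, LinearMap.mem_ker,
          mulVecLin_apply]
        exact exists_congr fun v => and_comm

theorem isClosed_setOf_rank_lt_card [Fintype m] [Fintype n] :
    IsClosed {C : Matrix m n ℝ | C.rank < Fintype.card n} := by
  classical
  have hdet : {C : Matrix m n ℝ | C.rank < Fintype.card n} =
      (fun C : Matrix m n ℝ => (Cᵀ * C).det) ⁻¹' {0} := by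
    ext C
    rw [Set.mem_ofPred_eq, ← rank_transpose_mul_self, rank_lt_card_iff_exists_mulVec_eq_zero,
      exists_mulVec_eq_zero_iff]
    rfl
  rw [hdet]
  exact isClosed_singleton.preimage
    (continuous_id.matrix_transpose.matrix_mul continuous_id).matrix_det

/-- The matrix closest to `A` (in Frobenius norm) among those agreeing with `B` on `u`. -/
def correctAlong [Fintype n] [Field K] (A B : Matrix m n K) (u : n → K) : Matrix m n K :=
  A - (u ⬝ᵥ u)⁻¹ • vecMulVec ((A - B) *ᵥ u) u

section correctAlong

variable [Fintype n] [Field K] (A B : Matrix m n K) {u : n → K}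

theorem correctAlong_mulVec_self (hu : u ⬝ᵥ u ≠ 0) : correctAlong A B u *ᵥ u = B *ᵥ u := by
  rw [correctAlong, sub_mulVec, smul_mulVec, vecMulVec_mulVec, op_smul_eq_smul, smul_smul,
    inv_mul_cancel₀ hu, one_smul, sub_mulVec, sub_sub_cancel]

theorem correctAlong_eq_self (h : (A - B) *ᵥ u = 0) : correctAlong A B u = A := by
  rw [correctAlong, h, zero_vecMulVec, smul_zero, sub_zero]

theorem continuousAt_correctAlong [TopologicalSpace K] [IsTopologicalDivisionRing K]
    (hu : u ⬝ᵥ u ≠ 0) : ContinuousAt (correctAlong A B) u :=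
  continuousAt_const.sub <|
    ((continuous_id.dotProduct continuous_id).continuousAt.inv₀ hu).smul
      ((continuous_const.matrix_mulVec continuous_id).matrix_vecMulVec continuous_id).continuousAt

end correctAlong

theorem exists_intCast_mulVec_eq_intCast [Finite m] [Fintype n]
    (B : Matrix m n ℝ) (hB : ∀ i j, ∃ r : ℚ, B i j = r) (u : n → ℝ) (hu : ∀ j, ∃ r : ℚ, u j = r) :
    ∃ c : ℤ, c ≠ 0 ∧ ∃ q : n → ℤ, (fun j => (q j : ℝ)) = (c : ℝ) • u ∧
      ∃ p : m → ℤ, B *ᵥ (fun j => (q j : ℝ)) = fun i => (p i : ℝ) := by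
  obtain ⟨d, hd, hint⟩ :=
    exists_int_ne_zero_mul_eq_intCast (Sum.elim (fun ij : m × n => B ij.1 ij.2) u) (by
      rintro (⟨i, j⟩ | j) <;> simp [hB, hu])
  choose t ht using fun i j => hint (.inl (i, j))
  choose z hz using fun j => hint (.inr j)
  simp only [Sum.elim_inl, Sum.elim_inr] at ht hz
  refine ⟨d * d, mul_ne_zero hd hd, fun j => d * z j, ?_, fun i => ∑ j, t i j * z j, ?_⟩
  · ext j; simp [← hz, mul_assoc]
  · ext i
    simp only [mulVec, dotProduct, Int.cast_sum, Int.cast_mul, ← ht, ← hz]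
    exact Finset.sum_congr rfl fun j _ => by ring

theorem exists_intRelation_correctAlong [Finite m] [Fintype n]
    (A B : Matrix m n ℝ) (hB : ∀ i j, ∃ r : ℚ, B i j = r) {u : n → ℝ} (hu0 : u ≠ 0)
    (hu : ∀ j, ∃ r : ℚ, u j = r) :
    ∃ q : n → ℤ, q ≠ 0 ∧ ∃ p : m → ℤ, B *ᵥ (fun j => (q j : ℝ)) = (fun i => (p i : ℝ)) ∧
      correctAlong A B u *ᵥ (fun j => (q j : ℝ)) = fun i => (p i : ℝ) := by
  obtain ⟨c, hc, q, hq, p, hp⟩ := B.exists_intCast_mulVec_eq_intCast hB u hu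
  have hq0 : q ≠ 0 := by
    rintro rfl
    have hcu : (c : ℝ) • u = 0 := by
      rw [← hq]
      ext
      simp
    exact hu0 ((smul_eq_zero.mp hcu).resolve_left (Int.cast_ne_zero.mpr hc))
  refine ⟨q, hq0, p, hp, ?_⟩
  rw [hq, mulVec_smul, correctAlong_mulVec_self A B (dotProduct_self_eq_zero.not.mpr hu0),
    ← mulVec_smul, ← hq, hp]

end Matrix

theorem closure_EB_eq_translate_low_rank (m n : ℕ)
    (B : Matrix (Fin m) (Fin n) ℝ) (hB : ∀ i j, ∃ r : ℚ, B i j = (r : ℝ)) :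
    closure {A : Matrix (Fin m) (Fin n) ℝ | ∃ q : Fin n → ℤ, q ≠ 0 ∧
        ∃ p : Fin m → ℤ, B.mulVec (fun j => (q j : ℝ)) = (fun i => (p i : ℝ)) ∧
          A.mulVec (fun j => (q j : ℝ)) = fun i => (p i : ℝ)} =
      {A : Matrix (Fin m) (Fin n) ℝ | (A - B).rank < n} := by
  have hrank (C : Matrix (Fin m) (Fin n) ℝ) : C.rank < n ↔ ∃ v ≠ 0, C *ᵥ v = 0 := by
    simpa only [Fintype.card_fin] using C.rank_lt_card_iff_exists_mulVec_eq_zero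
  have hclosed : IsClosed {C : Matrix (Fin m) (Fin n) ℝ | C.rank < n} := by
    simpa only [Fintype.card_fin] using isClosed_setOf_rank_lt_card (m := Fin m) (n := Fin n)
  apply subset_antisymm
  · refine closure_minimal ?_ (hclosed.preimage (continuous_sub_right B))
    rintro A ⟨q, hq, p, hBq, hAq⟩
    refine (hrank _).mpr ⟨fun j => (q j : ℝ), fun h => hq (funext fun j => ?_), ?_⟩
    · simpa using congrFun h j
    · rw [sub_mulVec, hAq, hBq, sub_self]
  · intro A hA
    obtain ⟨v, hv0, hv⟩ := (hrank _).mp hA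
    have hrat_dense : Dense (Set.range fun (r : Fin n → ℚ) (j : Fin n) => (r j : ℝ)) :=
      DenseRange.piMap fun _ => Rat.denseRange_cast
    rw [← correctAlong_eq_self A B hv]
    refine closure_mono ?_ <| mem_closure_image
      (continuousAt_correctAlong A B (dotProduct_self_eq_zero.not.mpr hv0))
      (hrat_dense.open_subset_closure_inter isOpen_compl_singleton hv0)
    rintro _ ⟨u, ⟨hu0, r, rfl⟩, rfl⟩
    exact exists_intRelation_correctAlong A B hB hu0 fun j => ⟨r j, rfl⟩
end

section
/- Let L be a g-dimensional rational subspace of ℝ^{n+1} (i.e., spanned by integer vectors) and let L⊥ be its orthogonal complement. Then Λ = L ∩ ℤ^{n+1} is a lattice of full rank g in L, Λ⊥ = L⊥ ∩ ℤ^{n+1} is a lattice of full rank n+1−g in L⊥, and the covolumes satisfy covol(L/Λ) = covol(L⊥/Λ⊥). -/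
/-!
The integer points Λ of a subspace `L ⊆ ℝᴺ` form a saturated subgroup of `ℤᴺ`, so by the Smith
normal form they are spanned by the first `g` rows of a unimodular matrix `P`. The rows of
`Q = (P⁻¹)ᵀ` are the dual basis, and its last `N - g` rows then span the integer points of `Lᗮ`.
Both Gram determinants are complementary minors of `P Pᵀ` and `Q Qᵀ = (P Pᵀ)⁻¹`; Jacobi's
identity relates them by the factor `(det P)² = 1`.
-/

open Matrix Module Submodule

namespace Matrix

variable {R : Type*} [CommRing R] {m p ι : Type*} [Fintype m] [Fintype p] [Fintype ι]
  [DecidableEq ι]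

theorem det_toBlocks₁₁_mul_transpose_eq [DecidableEq m] [DecidableEq p]
    (A B : Matrix (m ⊕ p) (m ⊕ p) R) (hAB : A * Bᵀ = 1) :
    (A * Aᵀ).toBlocks₁₁.det = A.det ^ 2 * (B * Bᵀ).toBlocks₂₂.det := by
  have hblocks : ∀ X Y : Matrix (m ⊕ p) (m ⊕ p) R, X * Yᵀ =
      fromBlocks (X.toRows₁ * Y.toRows₁ᵀ) (X.toRows₁ * Y.toRows₂ᵀ)
        (X.toRows₂ * Y.toRows₁ᵀ) (X.toRows₂ * Y.toRows₂ᵀ) := by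
    intro X Y
    conv_lhs => rw [← fromRows_toRows X, ← fromRows_toRows Y, transpose_fromRows]
    exact fromRows_mul_fromCols _ _ _ _
  rw [hblocks A A, hblocks B B, toBlocks_fromBlocks₁₁, toBlocks_fromBlocks₂₂]
  have hBA : B * Aᵀ = 1 := by rw [← transpose_transpose B, ← transpose_mul, hAB, transpose_one]
  have hdet : A.det * B.det = 1 := by rw [← det_transpose B, ← det_mul, hAB, det_one]
  rw [hblocks, ← fromBlocks_one, fromBlocks_inj] at hAB hBA
  -- `M Aᵀ` and `M Bᵀ` are block triangular, each with an identity diagonal block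
  set M := fromRows A.toRows₁ B.toRows₂
  have hMA : M.det * A.det = (A.toRows₁ * A.toRows₁ᵀ).det := by
    rw [← det_transpose A, ← det_mul, hblocks, toRows₁_fromRows, toRows₂_fromRows, hBA.2.2.1,
      hBA.2.2.2, det_fromBlocks_zero₂₁, det_one, mul_one]
  have hMB : M.det * B.det = (B.toRows₂ * B.toRows₂ᵀ).det := by
    rw [← det_transpose B, ← det_mul, hblocks, toRows₁_fromRows, toRows₂_fromRows, hAB.1, hAB.2.1,
      det_fromBlocks_zero₁₂, det_one, one_mul]
  linear_combination A.det ^ 2 * hMB - hMA - M.det * A.det * hdet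

theorem det_submatrix_mul_transpose_eq [DecidableEq m] [DecidableEq p] (P Q : Matrix ι ι R)
    (hPQ : P * Qᵀ = 1) (e : m ⊕ p ≃ ι) :
    ((P * Pᵀ).submatrix (e ∘ Sum.inl) (e ∘ Sum.inl)).det =
      P.det ^ 2 * ((Q * Qᵀ).submatrix (e ∘ Sum.inr) (e ∘ Sum.inr)).det := by
  have key := det_toBlocks₁₁_mul_transpose_eq (P.submatrix e e) (Q.submatrix e e)
    (by rw [transpose_submatrix, submatrix_mul_equiv, hPQ, submatrix_one_equiv])
  rwa [transpose_submatrix, transpose_submatrix, submatrix_mul_equiv, submatrix_mul_equiv,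
    det_submatrix_equiv_self] at key

theorem eq_sum_dotProduct_smul_of_dotProduct_eq_zero {P Q : Matrix ι ι R} (hPQ : P * Qᵀ = 1)
    (e : m ⊕ p ≃ ι) {z : ι → R} (hz : ∀ i, P (e (Sum.inl i)) ⬝ᵥ z = 0) :
    z = ∑ i, (P (e (Sum.inr i)) ⬝ᵥ z) • Q (e (Sum.inr i)) :=
  calc z = Qᵀ *ᵥ (P *ᵥ z) := by rw [mulVec_mulVec, mul_eq_one_comm.1 hPQ, one_mulVec]
    _ = ∑ k, (P k ⬝ᵥ z) • Q k := by rw [mulVec_transpose, vecMul_eq_sum]; rfl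
    _ = _ := by simp [← e.sum_comp, hz]

end Matrix

theorem Submodule.exists_basis_span_eq_of_smul_mem {R M ι : Type*} [CommRing R] [IsDomain R]
    [IsPrincipalIdealRing R] [AddCommGroup M] [Module R M] [Finite ι] (b : Basis ι R M)
    (N : Submodule R M) (hN : ∀ (r : R) (x : M), r ≠ 0 → r • x ∈ N → x ∈ N) :
    ∃ (m : ℕ) (b' : Basis ι R M) (f : Fin m ↪ ι), N = span R (Set.range (b' ∘ f)) := by
  obtain ⟨m, b', bN, f, a, hbN⟩ := N.smithNormalForm b
  refine ⟨m, b', f, le_antisymm ?_ ?_⟩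
  · calc N = map N.subtype (span R (Set.range bN)) := by rw [bN.span_eq, map_top, range_subtype]
      _ = span R (Set.range fun i => a i • b' (f i)) := by
        rw [map_span, ← Set.range_comp]; simp_rw [Function.comp_def, N.subtype_apply, hbN]
      _ ≤ _ := span_le.2 <| Set.range_subset_iff.2 fun i =>
        smul_mem _ _ (subset_span (Set.mem_range_self i))
  · rw [span_le]
    rintro _ ⟨i, rfl⟩
    refine hN (a i) _ (fun ha => bN.ne_zero i ?_) (hbN i ▸ (bN i).2)
    ext1
    simp [hbN i, ha]

theorem Fin.exists_sumEquiv_inl_eq {m N : ℕ} (f : Fin m ↪ Fin N) :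
    ∃ e : Fin m ⊕ Fin (N - m) ≃ Fin N, ∀ i, e (Sum.inl i) = f i := by
  classical
  have hcard : Fintype.card ↥(Set.range f)ᶜ = N - m := by
    rw [Fintype.card_compl_set, Set.card_range_of_injective f.injective, Fintype.card_fin,
      Fintype.card_fin]
  exact ⟨(Equiv.sumCongr (Equiv.ofInjective f f.injective)
    (Fintype.equivFinOfCardEq hcard).symm).trans (Equiv.Set.sumCompl _), fun _ => rfl⟩

section IntegerPoints

variable {ι : Type*}

variable (ι) in
noncomputable def intToEuclidean : (ι → ℤ) →ₗ[ℤ] EuclideanSpace ℝ ι :=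
  (WithLp.linearEquiv 2 ℤ (ι → ℝ)).symm.toLinearMap ∘ₗ (Int.castAddHom ℝ).toIntLinearMap.compLeft ι

noncomputable def integerPoints (L : Submodule ℝ (EuclideanSpace ℝ ι)) : Submodule ℤ (ι → ℤ) :=
  (L.restrictScalars ℤ).comap (intToEuclidean ι)

theorem inner_intToEuclidean [Fintype ι] (x y : ι → ℤ) :
    inner ℝ (intToEuclidean ι x) (intToEuclidean ι y) = ((x ⬝ᵥ y : ℤ) : ℝ) := by
  simp [intToEuclidean, PiLp.inner_apply, dotProduct, mul_comm]

theorem mem_integerPoints_of_smul_mem {L : Submodule ℝ (EuclideanSpace ℝ ι)} {r : ℤ}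
    {z : ι → ℤ} (hr : r ≠ 0) (h : r • z ∈ integerPoints L) : z ∈ integerPoints L := by
  have h' : intToEuclidean ι (r • z) ∈ L := h
  rw [map_zsmul, ← Int.cast_smul_eq_zsmul ℝ] at h'
  exact (L.smul_mem_iff (Int.cast_ne_zero.2 hr)).1 h'

theorem exists_isUnit_det_integerPoints_eq_span {N : ℕ}
    (L : Submodule ℝ (EuclideanSpace ℝ (Fin N))) :
    ∃ (m : ℕ) (P : Matrix (Fin N) (Fin N) ℤ) (e : Fin m ⊕ Fin (N - m) ≃ Fin N),
      IsUnit P.det ∧ integerPoints L = span ℤ (Set.range fun i => P (e (Sum.inl i))) := by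
  obtain ⟨m, b, f, hb⟩ := (integerPoints L).exists_basis_span_eq_of_smul_mem (Pi.basisFun ℤ _)
    fun _ _ => mem_integerPoints_of_smul_mem
  obtain ⟨e, he⟩ := Fin.exists_sumEquiv_inl_eq f
  refine ⟨m, .of b, e, ?_, by simp only [hb, he]; rfl⟩
  rw [← Pi.basisFun_det_apply]
  exact (Pi.basisFun ℤ _).isUnit_det b

theorem eq_span_of_integerPoints_eq_span {κ κ' : Type*} {L : Submodule ℝ (EuclideanSpace ℝ ι)}
    {b : κ → ι → ℤ} {w : κ' → ι → ℤ} (hL : L = span ℝ (Set.range fun i => intToEuclidean ι (b i)))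
    (hΛ : integerPoints L = span ℤ (Set.range w)) :
    L = span ℝ (Set.range fun i => intToEuclidean ι (w i)) := by
  have hw : ∀ i, w i ∈ integerPoints L := fun i => hΛ ▸ subset_span (Set.mem_range_self i)
  refine le_antisymm ?_ (span_le.2 <| Set.range_subset_iff.2 hw)
  conv_lhs => rw [hL]
  refine span_le.2 <| Set.range_subset_iff.2 fun i => span_le_restrictScalars ℤ ℝ _ ?_
  have hb : b i ∈ span ℤ (Set.range w) := hΛ ▸ show intToEuclidean ι (b i) ∈ L from
    hL ▸ subset_span (Set.mem_range_self i)
  rw [← Function.comp_def, Set.range_comp, span_image]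
  exact mem_map_of_mem hb

theorem linearIndependent_intToEuclidean_of_isUnit_det [Fintype ι] [DecidableEq ι]
    {P : Matrix ι ι ℤ} (hP : IsUnit P.det) :
    LinearIndependent ℝ fun i => intToEuclidean ι (P i) := by
  have hPℝ : IsUnit (P.map (Int.cast : ℤ → ℝ)) := by
    rw [isUnit_iff_isUnit_det, ← Int.cast_det]
    exact hP.map (Int.castRingHom ℝ)
  exact (linearIndependent_rows_of_isUnit hPℝ).map'
    (WithLp.linearEquiv 2 ℝ (ι → ℝ)).symm.toLinearMap (LinearEquiv.ker _)

theorem integerPoints_orthogonal_eq_span {m p : Type*} [Fintype ι] [DecidableEq ι] [Fintype m]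
    [Fintype p] {P Q : Matrix ι ι ℤ} (hPQ : P * Qᵀ = 1) (e : m ⊕ p ≃ ι) :
    integerPoints (span ℝ (Set.range fun i => intToEuclidean ι (P (e (Sum.inl i)))))ᗮ =
      span ℤ (Set.range fun i => Q (e (Sum.inr i))) := by
  refine le_antisymm (fun z hz => ?_) (span_le.2 <| Set.range_subset_iff.2 fun i => ?_)
  · have hPz : ∀ i, P (e (Sum.inl i)) ⬝ᵥ z = 0 := fun i => by
      have := inner_right_of_mem_orthogonal (subset_span (Set.mem_range_self i)) hz
      exact_mod_cast (inner_intToEuclidean _ _).symm.trans this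
    rw [eq_sum_dotProduct_smul_of_dotProduct_eq_zero hPQ e hPz]
    exact sum_mem fun i _ => smul_mem _ _ (subset_span (Set.mem_range_self i))
  · have hdot : ∀ i j, Q j ⬝ᵥ P i = (1 : Matrix ι ι ℤ) i j := fun i j => by
      rw [← hPQ, dotProduct_comm]; rfl
    have hortho : span ℝ (Set.range fun i => intToEuclidean ι (Q (e (Sum.inr i)))) ⟂
        span ℝ (Set.range fun i => intToEuclidean ι (P (e (Sum.inl i)))) := by
      simp [isOrtho_span, inner_intToEuclidean, hdot, one_apply, e.injective.eq_iff]
    exact hortho (subset_span (Set.mem_range_self i))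

theorem intCast_det_submatrix_mul_transpose {κ : Type*} [Fintype ι] [Fintype κ] [DecidableEq κ]
    (X : Matrix ι ι ℤ) (s : κ → ι) :
    (((X * Xᵀ).submatrix s s).det : ℝ) =
      (of fun i i' => ∑ j, (X (s i) j : ℝ) * X (s i') j).det := by
  rw [Int.cast_det]
  congr 1
  ext
  simp [mul_apply]

end IntegerPoints

theorem rational_subspace_dual_covolume_general (n g : ℕ)
    (L : Submodule ℝ (EuclideanSpace ℝ (Fin (n + 1))))
    (hL : ∃ b : Fin g → (Fin (n + 1) → ℤ),
      LinearIndependent ℝ (fun i => (WithLp.toLp 2 (fun j => (b i j : ℝ)) : EuclideanSpace ℝ (Fin (n + 1)))) ∧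
      L = Submodule.span ℝ
        (Set.range fun i => (WithLp.toLp 2 (fun j => (b i j : ℝ)) : EuclideanSpace ℝ (Fin (n + 1))))) :
    ∃ (u : Fin g → (Fin (n + 1) → ℤ)) (v : Fin (n + 1 - g) → (Fin (n + 1) → ℤ)),
      -- Λ = L ∩ ℤ^{n+1} is a lattice of full rank g in L, with ℤ-basis u
      LinearIndependent ℝ (fun i => (WithLp.toLp 2 (fun j => (u i j : ℝ)) : EuclideanSpace ℝ (Fin (n + 1)))) ∧
      (∀ i, (WithLp.toLp 2 (fun j => (u i j : ℝ)) : EuclideanSpace ℝ (Fin (n + 1))) ∈ L) ∧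
      (∀ z : Fin (n + 1) → ℤ,
        (WithLp.toLp 2 (fun j => (z j : ℝ)) : EuclideanSpace ℝ (Fin (n + 1))) ∈ L →
        ∃ c : Fin g → ℤ, z = ∑ i, c i • u i) ∧
      -- Λ⊥ = L⊥ ∩ ℤ^{n+1} is a lattice of full rank n+1-g in L⊥, with ℤ-basis v
      LinearIndependent ℝ (fun i => (WithLp.toLp 2 (fun j => (v i j : ℝ)) : EuclideanSpace ℝ (Fin (n + 1)))) ∧
      (∀ i, (WithLp.toLp 2 (fun j => (v i j : ℝ)) : EuclideanSpace ℝ (Fin (n + 1))) ∈ Lᗮ) ∧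
      (∀ z : Fin (n + 1) → ℤ,
        (WithLp.toLp 2 (fun j => (z j : ℝ)) : EuclideanSpace ℝ (Fin (n + 1))) ∈ Lᗮ →
        ∃ c : Fin (n + 1 - g) → ℤ, z = ∑ i, c i • v i) ∧
      -- equality of covolumes, expressed via Gram determinants of the ℤ-bases
      Matrix.det (Matrix.of fun i i' => ∑ j, (u i j : ℝ) * (u i' j : ℝ)) =
        Matrix.det (Matrix.of fun i i' => ∑ j, (v i j : ℝ) * (v i' j : ℝ)) := by
  obtain ⟨b, hb, hLb⟩ := hL
  obtain ⟨m, P, e, hP, hΛ⟩ := exists_isUnit_det_integerPoints_eq_span L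
  set Q := P⁻¹ᵀ
  have hPQ : P * Qᵀ = 1 := by rw [transpose_transpose, mul_nonsing_inv _ hP]
  have hQ : IsUnit Q.det := by rw [det_transpose]; exact isUnit_nonsing_inv_det _ hP
  have hLP := eq_span_of_integerPoints_eq_span hLb hΛ
  have hu : LinearIndependent ℝ fun i => intToEuclidean _ (P (e (Sum.inl i))) :=
    (linearIndependent_intToEuclidean_of_isUnit_det hP).comp _ (e.injective.comp Sum.inl_injective)
  have hv : LinearIndependent ℝ fun i => intToEuclidean _ (Q (e (Sum.inr i))) :=
    (linearIndependent_intToEuclidean_of_isUnit_det hQ).comp _ (e.injective.comp Sum.inr_injective)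
  obtain rfl : m = g := by
    have hg := finrank_span_eq_card hb
    rw [← hLb, hLP, finrank_span_eq_card hu] at hg
    simpa using hg
  have hΛperp := integerPoints_orthogonal_eq_span hPQ e
  rw [← hLP] at hΛperp
  have hgram := congrArg (Int.cast : ℤ → ℝ) (det_submatrix_mul_transpose_eq P Q hPQ e)
  rw [Int.isUnit_sq hP, one_mul, intCast_det_submatrix_mul_transpose,
    intCast_det_submatrix_mul_transpose] at hgram
  exact ⟨fun i => P (e (Sum.inl i)), fun i => Q (e (Sum.inr i)), hu,
    fun i => hLP ▸ subset_span (Set.mem_range_self i),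
    fun z hz => ((mem_span_range_iff_exists_fun ℤ).1 (hΛ.le hz)).imp fun _ => Eq.symm, hv,
    fun i => hΛperp.ge (subset_span (Set.mem_range_self i)),
    fun z hz => ((mem_span_range_iff_exists_fun ℤ).1 (hΛperp.le hz)).imp fun _ => Eq.symm, hgram⟩

theorem rational_subspace_dual_covolume (n g : ℕ) (hg : 1 ≤ g) (hgn : g ≤ n + 1)
    (L : Submodule ℝ (EuclideanSpace ℝ (Fin (n + 1))))
    (hL : ∃ b : Fin g → (Fin (n + 1) → ℤ),
      LinearIndependent ℝ (fun i => (WithLp.toLp 2 (fun j => (b i j : ℝ)) : EuclideanSpace ℝ (Fin (n + 1)))) ∧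
      L = Submodule.span ℝ
        (Set.range fun i => (WithLp.toLp 2 (fun j => (b i j : ℝ)) : EuclideanSpace ℝ (Fin (n + 1))))) :
    ∃ (u : Fin g → (Fin (n + 1) → ℤ)) (v : Fin (n + 1 - g) → (Fin (n + 1) → ℤ)),
      -- Λ = L ∩ ℤ^{n+1} is a lattice of full rank g in L, with ℤ-basis u
      LinearIndependent ℝ (fun i => (WithLp.toLp 2 (fun j => (u i j : ℝ)) : EuclideanSpace ℝ (Fin (n + 1)))) ∧
      (∀ i, (WithLp.toLp 2 (fun j => (u i j : ℝ)) : EuclideanSpace ℝ (Fin (n + 1))) ∈ L) ∧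
      (∀ z : Fin (n + 1) → ℤ,
        (WithLp.toLp 2 (fun j => (z j : ℝ)) : EuclideanSpace ℝ (Fin (n + 1))) ∈ L →
        ∃ c : Fin g → ℤ, z = ∑ i, c i • u i) ∧
      -- Λ⊥ = L⊥ ∩ ℤ^{n+1} is a lattice of full rank n+1-g in L⊥, with ℤ-basis v
      LinearIndependent ℝ (fun i => (WithLp.toLp 2 (fun j => (v i j : ℝ)) : EuclideanSpace ℝ (Fin (n + 1)))) ∧
      (∀ i, (WithLp.toLp 2 (fun j => (v i j : ℝ)) : EuclideanSpace ℝ (Fin (n + 1))) ∈ Lᗮ) ∧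
      (∀ z : Fin (n + 1) → ℤ,
        (WithLp.toLp 2 (fun j => (z j : ℝ)) : EuclideanSpace ℝ (Fin (n + 1))) ∈ Lᗮ →
        ∃ c : Fin (n + 1 - g) → ℤ, z = ∑ i, c i • v i) ∧
      -- equality of covolumes, expressed via Gram determinants of the ℤ-bases
      Matrix.det (Matrix.of fun i i' => ∑ j, (u i j : ℝ) * (u i' j : ℝ)) =
        Matrix.det (Matrix.of fun i i' => ∑ j, (v i j : ℝ) * (v i' j : ℝ)) :=
  rational_subspace_dual_covolume_general n g L hL
end

section
/- Let x₀ be a nonzero vector in ℝ^{n+1}, let M = x₀⊥ be its orthogonal hyperplane, and let L be a linear subspace of ℝ^{n+1}. Define θ_max as the maximal angle between nonzero vectors of L and nonzero vectors of M, and θ_min as the minimal angle between nonzero vectors of L⊥ and x₀. Then θ_min ≤ θ_max. -/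
/-!
Decompose `x₀ = p + q` with `p ∈ L` and `q ∈ Lᗮ`. If both are nonzero, `v = ‖p‖² q - ‖q‖² p` is
orthogonal to `x₀`, and the angle between `p` and `v` equals the angle between `q` and `x₀`: both
have cosine `‖q‖ / ‖x₀‖`. If `q = 0` then `x₀ ∈ L` and both angles can be taken to be `π / 2`; if
`p = 0` then `x₀ ∈ Lᗮ` realises the angle `0`.
-/

open Real RealInnerProductSpace Module

section LineAngle

variable {E : Type*} [NormedAddCommGroup E] [InnerProductSpace ℝ E]

noncomputable def lineAngle (u v : E) : ℝ := Real.arccos (|⟪u, v⟫| / (‖u‖ * ‖v‖))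

lemma lineAngle_nonneg (u v : E) : 0 ≤ lineAngle u v := Real.arccos_nonneg _

lemma lineAngle_le_pi (u v : E) : lineAngle u v ≤ π := Real.arccos_le_pi _

lemma lineAngle_self {x : E} (hx : x ≠ 0) : lineAngle x x = 0 := by
  have hx' : ‖x‖ ≠ 0 := norm_ne_zero_iff.mpr hx
  rw [lineAngle, real_inner_self_eq_norm_mul_norm, abs_mul_self, div_self (mul_ne_zero hx' hx'),
    Real.arccos_one]

lemma lineAngle_of_inner_eq_zero {u v : E} (h : ⟪u, v⟫ = 0) : lineAngle u v = π / 2 := by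
  rw [lineAngle, h, abs_zero, zero_div, Real.arccos_zero]

section Orthogonal

variable {p q : E}

lemma inner_add_smul_sub_smul_eq_zero (hpq : ⟪p, q⟫ = 0) :
    ⟪p + q, ‖p‖ ^ 2 • q - ‖q‖ ^ 2 • p⟫ = 0 := by
  simp only [inner_add_left, inner_sub_right, real_inner_smul_right, hpq, real_inner_comm p q,
    real_inner_self_eq_norm_sq]
  ring

lemma norm_smul_sub_smul_eq (hpq : ⟪p, q⟫ = 0) :
    ‖‖p‖ ^ 2 • q - ‖q‖ ^ 2 • p‖ = ‖p‖ * ‖q‖ * ‖p + q‖ := by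
  have hsum : ‖p + q‖ ^ 2 = ‖p‖ ^ 2 + ‖q‖ ^ 2 := by
    rw [norm_add_sq_real, hpq]; ring
  refine (sq_eq_sq₀ (norm_nonneg _) (by positivity)).mp ?_
  rw [← real_inner_self_eq_norm_sq]
  simp only [inner_sub_left, inner_sub_right, real_inner_smul_left, real_inner_smul_right, hpq,
    real_inner_comm p q]
  simp only [real_inner_self_eq_norm_sq]
  rw [mul_pow, hsum]
  ring

lemma lineAngle_add_eq (hpq : ⟪p, q⟫ = 0) (hp : p ≠ 0) (hq : q ≠ 0) :
    lineAngle q (p + q) = lineAngle p (‖p‖ ^ 2 • q - ‖q‖ ^ 2 • p) := by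
  have hp' : 0 < ‖p‖ := norm_pos_iff.mpr hp
  have hq' : 0 < ‖q‖ := norm_pos_iff.mpr hq
  have hqx : ⟪q, p + q⟫ = ‖q‖ ^ 2 := by
    rw [inner_add_right, real_inner_comm, hpq, real_inner_self_eq_norm_sq, zero_add]
  have hpv : ⟪p, ‖p‖ ^ 2 • q - ‖q‖ ^ 2 • p⟫ = -(‖q‖ ^ 2 * ‖p‖ ^ 2) := by
    rw [inner_sub_right, real_inner_smul_right, real_inner_smul_right, hpq,
      real_inner_self_eq_norm_sq]
    ring
  have hpq' : ‖p + q‖ ≠ 0 := by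
    have := norm_add_sq_eq_norm_sq_add_norm_sq_real hpq
    nlinarith
  rw [lineAngle, lineAngle, hqx, hpv, norm_smul_sub_smul_eq hpq, abs_neg,
    abs_of_nonneg (by positivity), abs_of_nonneg (by positivity)]
  field_simp

end Orthogonal

lemma exists_inner_eq_zero_ne_zero [FiniteDimensional ℝ E] (hE : 1 < finrank ℝ E) (x : E) :
    ∃ v, ⟪x, v⟫ = 0 ∧ v ≠ 0 := by
  have hspan : finrank ℝ (ℝ ∙ x) ≤ 1 := by
    simpa using finrank_span_le_card ({x} : Set E)
  have hM : (ℝ ∙ x)ᗮ ≠ ⊥ := by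
    rw [Ne, ← Submodule.finrank_eq_zero]
    have := (ℝ ∙ x).finrank_add_finrank_orthogonal
    omega
  obtain ⟨v, hv, hv0⟩ := Submodule.exists_mem_ne_zero_of_ne_bot hM
  exact ⟨v, Submodule.mem_orthogonal_singleton_iff_inner_right.mp hv, hv0⟩

theorem exists_lineAngle_orthogonal_le (K : Submodule ℝ E) [K.HasOrthogonalProjection] {x : E}
    (hx : x ≠ 0) (hK : K ≠ ⊥) (hK' : Kᗮ ≠ ⊥) (hM : ∃ v, ⟪x, v⟫ = 0 ∧ v ≠ 0) :
    ∃ u ∈ Kᗮ, u ≠ 0 ∧ ∃ w ∈ K, w ≠ 0 ∧ ∃ v, ⟪x, v⟫ = 0 ∧ v ≠ 0 ∧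
      lineAngle u x ≤ lineAngle w v := by
  obtain ⟨v, hxv, hv⟩ := hM
  by_cases hxK : x ∈ K
  · obtain ⟨u, hu, hu0⟩ := Submodule.exists_mem_ne_zero_of_ne_bot hK'
    refine ⟨u, hu, hu0, x, hxK, hx, v, hxv, hv, ?_⟩
    rw [lineAngle_of_inner_eq_zero (Submodule.inner_left_of_mem_orthogonal hxK hu),
      lineAngle_of_inner_eq_zero hxv]
  by_cases hxK' : x ∈ Kᗮ
  · obtain ⟨w, hw, hw0⟩ := Submodule.exists_mem_ne_zero_of_ne_bot hK
    exact ⟨x, hxK', hx, w, hw, hw0, v, hxv, hv,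
      (lineAngle_self hx).trans_le (lineAngle_nonneg w v)⟩
  set p := K.starProjection x
  set q := x - p
  have hpK : p ∈ K := K.starProjection_apply_mem x
  have hqK : q ∈ Kᗮ := K.sub_starProjection_mem_orthogonal x
  have hpq_eq : p + q = x := add_sub_cancel p x
  have hpq : ⟪p, q⟫ = 0 := Submodule.inner_right_of_mem_orthogonal hpK hqK
  have hp : p ≠ 0 := fun h => hxK' (by rwa [← hpq_eq, h, zero_add])
  have hq : q ≠ 0 := fun h => hxK (by rwa [← hpq_eq, h, add_zero])
  refine ⟨q, hqK, hq, p, hpK, hp, ‖p‖ ^ 2 • q - ‖q‖ ^ 2 • p,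
    hpq_eq ▸ inner_add_smul_sub_smul_eq_zero hpq, ?_, (hpq_eq ▸ lineAngle_add_eq hpq hp hq).le⟩
  rw [← norm_ne_zero_iff, norm_smul_sub_smul_eq hpq, hpq_eq]
  positivity

end LineAngle

open RealInnerProductSpace in
theorem theta_min_le_theta_max (n : ℕ) (hn : 1 ≤ n)
    (x₀ : EuclideanSpace ℝ (Fin (n + 1))) (hx₀ : x₀ ≠ 0)
    (L : Submodule ℝ (EuclideanSpace ℝ (Fin (n + 1))))
    (hL : L ≠ ⊥) (hL' : Lᗮ ≠ ⊥) :
    sInf {θ : ℝ | ∃ u ∈ Lᗮ, u ≠ 0 ∧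
        θ = Real.arccos (|⟪u, x₀⟫| / (‖u‖ * ‖x₀‖))} ≤
      sSup {θ : ℝ | ∃ u ∈ L, u ≠ 0 ∧ ∃ v : EuclideanSpace ℝ (Fin (n + 1)),
        ⟪x₀, v⟫ = 0 ∧ v ≠ 0 ∧
        θ = Real.arccos (|⟪u, v⟫| / (‖u‖ * ‖v‖))} := by
  have hM : ∃ v, ⟪x₀, v⟫ = 0 ∧ v ≠ 0 :=
    exists_inner_eq_zero_ne_zero (by rw [finrank_euclideanSpace_fin]; omega) x₀
  obtain ⟨u, hu, hu0, w, hw, hw0, v, hv, hv0, hle⟩ :=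
    exists_lineAngle_orthogonal_le L hx₀ hL hL' hM
  change sInf {θ | ∃ u ∈ Lᗮ, u ≠ 0 ∧ θ = lineAngle u x₀} ≤
    sSup {θ | ∃ u ∈ L, u ≠ 0 ∧ ∃ v, ⟪x₀, v⟫ = 0 ∧ v ≠ 0 ∧ θ = lineAngle u v}
  calc _ ≤ lineAngle u x₀ :=
        csInf_le ⟨0, by rintro _ ⟨u, -, -, rfl⟩; exact lineAngle_nonneg u x₀⟩
          (by exact ⟨u, hu, hu0, rfl⟩)
    _ ≤ lineAngle w v := hle
    _ ≤ _ := le_csSup ⟨π, by rintro _ ⟨u, -, -, v, -, -, rfl⟩; exact lineAngle_le_pi u v⟩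
          (by exact ⟨w, hw, hw0, v, hv, hv0, rfl⟩)
end

section
/- Let Y be a locally compact metric space, for each k ∈ ℕ let X_k be a topological space with a countable family of continuous nonnegative functions {d_{k,s} : s ∈ I} and heights {h_{k,s} > 0 : s ∈ I}, let f_k : ℝ_{>0} → ℝ_{>0} be non-increasing, and let φ_k : Y → X_k be continuous. Let L : ℕ → closed subsets of Y and R : ℕ → closed subsets of Y be such that: (a) for all k, i there exists s with d_{k,s} ≡ 0 on φ_k(L_i); (b) ⋃_i L_i is dense in Y; (c) for every i, ℓ and every open W ⊆ Y with L_i ∩ W ≠ ∅ there exists j with L_i ∩ L_j ∩ W ≠ ∅ and L_j ⊄ R_ℓ; (d) for every i, ℓ with L_i ⊄ R_ℓ, the set L_i \ R_ℓ is dense in L_i. Then the set of y ∈ Y such that y ∉ ⋃_ℓ R_ℓ and, for every k, φ_k(y) is (X_k, f_k)-uniform (i.e., for all sufficiently large t there exists s with d_{k,s}(φ_k(y)) ≤ f_k(t) and h_{k,s} ≤ t), is dense in Y. -/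
/-- Dependent choice building a sequence with stage-dependent invariants `P` and
relational invariants `Q` between consecutive terms. -/
theorem abstract_khintchine_depChoice {α : Type*} (P : ℕ → α → Prop) (Q : ℕ → α → α → Prop)
    (a0 : α) (h0 : P 0 a0)
    (step : ∀ n a, P n a → ∃ b, P (n + 1) b ∧ Q n a b) :
    ∃ F : ℕ → α, F 0 = a0 ∧ (∀ n, P n (F n)) ∧ ∀ n, Q n (F n) (F (n + 1)) := by
  let G : ∀ n : ℕ, {a : α // P n a} := fun n =>
    Nat.rec ⟨a0, h0⟩
      (fun n ih => ⟨(step n ih.1 ih.2).choose, (step n ih.1 ih.2).choose_spec.1⟩) n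
  exact ⟨fun n => (G n).1, rfl, fun n => (G n).2,
    fun n => (step n (G n).1 (G n).2).choose_spec.2⟩

/-- Crossing lemma: a monotone sequence that starts below `t` and eventually exceeds `t`
crosses `t` at some index past the starting one. -/
theorem abstract_khintchine_cross (u : ℕ → ℝ) (hu : Monotone u) (a : ℕ) (t : ℝ)
    (h1 : u a ≤ t) (m : ℕ) (h2 : t < u m) :
    ∃ n, a ≤ n ∧ u n ≤ t ∧ t < u (n + 1) := by
  induction m with
  | zero => exact absurd ((hu (Nat.zero_le a)).trans h1) (not_le.2 h2)
  | succ m ih =>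
    by_cases hm : t < u m
    · exact ih hm
    · push_neg at hm
      have ham : a ≤ m := by
        by_contra hh
        push_neg at hh
        exact absurd ((hu hh).trans h1) (not_le.2 h2)
      exact ⟨m, ham, hm, h2⟩

theorem abstract_khintchine
    {Y : Type*} [MetricSpace Y] [LocallyCompactSpace Y]
    {I : Type*} [Countable I]
    (X : ℕ → Type*) [∀ k, TopologicalSpace (X k)]
    (d : ∀ k, I → X k → ℝ) (hd_cont : ∀ k s, Continuous (d k s))
    (hd_nonneg : ∀ k s x, 0 ≤ d k s x)
    (h : ℕ → I → ℝ) (hh_pos : ∀ k s, 0 < h k s)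
    (f : ℕ → ℝ → ℝ) (hf_pos : ∀ k t, 0 < t → 0 < f k t)
    (hf_mono : ∀ k s t, 0 < s → s ≤ t → f k t ≤ f k s)
    (φ : ∀ k, Y → X k) (hφ : ∀ k, Continuous (φ k))
    (L : ℕ → Set Y) (hL_closed : ∀ i, IsClosed (L i))
    (R : ℕ → Set Y) (hR_closed : ∀ ℓ, IsClosed (R ℓ))
    (ha : ∀ k i, ∃ s : I, ∀ y ∈ L i, d k s (φ k y) = 0)
    (hb : Dense (⋃ i, L i))
    (hc : ∀ i ℓ (W : Set Y), IsOpen W → (L i ∩ W).Nonempty →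
      ∃ j, (L i ∩ L j ∩ W).Nonempty ∧ ¬ L j ⊆ R ℓ)
    (hd' : ∀ i ℓ, ¬ L i ⊆ R ℓ → ∀ y ∈ L i, y ∈ closure (L i \ R ℓ)) :
    Dense {y : Y | (y ∉ ⋃ ℓ, R ℓ) ∧
      ∀ k, ∃ T : ℝ, 0 < T ∧ ∀ t : ℝ, T ≤ t →
        ∃ s : I, d k s (φ k y) ≤ f k t ∧ h k s ≤ t} := by
  choose σ hσ using ha
  rw [dense_iff_inter_open]
  intro U hU hUne
  -- find an initial point in some L j inside U
  obtain ⟨y0, hy0mem, hy0U⟩ := hb.exists_mem_open hU hUne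
  obtain ⟨j0, hy0L⟩ := Set.mem_iUnion.1 hy0mem
  -- initial compact closed ball inside U
  obtain ⟨K0, hK0, hy0K0, hK0U⟩ := exists_compact_subset hU hy0U
  obtain ⟨ε0, hε0, hball0⟩ := Metric.isOpen_iff.1 isOpen_interior y0 hy0K0
  have hcb0K : Metric.closedBall y0 (ε0 / 2) ⊆ K0 :=
    (Metric.closedBall_subset_ball (by linarith)).trans (hball0.trans interior_subset)
  -- state: (j, y, r, T)
  -- invariants P n (j,y,r,T)
  have hstep : ∀ (n : ℕ) (st : ℕ × Y × ℝ × (ℕ → ℝ)),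
      (0 < st.2.2.1 ∧ st.2.1 ∈ L st.1 ∧ IsCompact (Metric.closedBall st.2.1 st.2.2.1) ∧
          (∀ k, (n : ℝ) + 1 ≤ st.2.2.2 k) ∧ (∀ k, h k (σ k st.1) ≤ st.2.2.2 k)) →
        ∃ st' : ℕ × Y × ℝ × (ℕ → ℝ),
          (0 < st'.2.2.1 ∧ st'.2.1 ∈ L st'.1 ∧
            IsCompact (Metric.closedBall st'.2.1 st'.2.2.1) ∧
            (∀ k, ((n + 1 : ℕ) : ℝ) + 1 ≤ st'.2.2.2 k) ∧
            (∀ k, h k (σ k st'.1) ≤ st'.2.2.2 k)) ∧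
          (Metric.closedBall st'.2.1 st'.2.2.1 ⊆ Metric.closedBall st.2.1 st.2.2.1 ∧
          (∀ z ∈ Metric.closedBall st'.2.1 st'.2.2.1, z ∉ R n) ∧
          (∀ k, st.2.2.2 k + 1 ≤ st'.2.2.2 k) ∧
          (∀ k ≤ n, ∀ z ∈ Metric.closedBall st'.2.1 st'.2.2.1,
            d k (σ k st.1) (φ k z) ≤ f k (st'.2.2.2 k))) := by
    rintro n ⟨j, y, r, T⟩ ⟨hr, hyL, hcomp, hT1, hTh⟩
    dsimp only at hr hyL hcomp hT1 hTh ⊢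
    -- find new index j' via (c)
    obtain ⟨j', ⟨p, ⟨hpLj, hpLj'⟩, hpball⟩, hnsub⟩ :=
      hc j n (Metric.ball y r) Metric.isOpen_ball ⟨y, hyL, Metric.mem_ball_self hr⟩
    -- new times
    set T' : ℕ → ℝ := fun k => max (T k + 1) (h k (σ k j')) with hT'
    have hT'ge : ∀ k, T k + 1 ≤ T' k := fun k => le_max_left _ _
    have hT'pos : ∀ k, 0 < T' k := fun k =>
      lt_of_lt_of_le (by have h1 := hT1 k; have h2 : (0:ℝ) ≤ (n:ℝ) := Nat.cast_nonneg n; linarith) (hT'ge k)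
    -- open set where the old distances are small
    set V : Set Y := Metric.ball y r ∩
      ⋂ k ∈ Finset.range (n + 1), {z | d k (σ k j) (φ k z) < f k (T' k)} with hV
    have hVopen : IsOpen V := by
      refine Metric.isOpen_ball.inter (isOpen_biInter_finset fun k _ => ?_)
      exact isOpen_lt ((hd_cont k (σ k j)).comp (hφ k)) continuous_const
    have hpV : p ∈ V := by
      refine ⟨hpball, Set.mem_iInter₂.2 fun k _ => ?_⟩
      have : d k (σ k j) (φ k p) = 0 := hσ k j p hpLj
      simpa [this] using hf_pos k (T' k) (hT'pos k)
    -- move to a point of L j' \ R n inside V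
    have hpcl : p ∈ closure (L j' \ R n) := hd' j' n hnsub p hpLj'
    obtain ⟨q, hqV, hqLR⟩ := _root_.mem_closure_iff.1 hpcl V hVopen hpV
    obtain ⟨hqLj', hqR⟩ := hqLR
    -- compact closed ball around q inside V \ R n
    have hopen2 : IsOpen (V ∩ (R n)ᶜ) := hVopen.inter (hR_closed n).isOpen_compl
    obtain ⟨K, hK, hqK, hKsub⟩ := exists_compact_subset hopen2 ⟨hqV, hqR⟩
    obtain ⟨ε, hε, hball⟩ := Metric.isOpen_iff.1 isOpen_interior q hqK
    have hcbK : Metric.closedBall q (ε / 2) ⊆ K :=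
      (Metric.closedBall_subset_ball (by linarith)).trans (hball.trans interior_subset)
    have hcbV : Metric.closedBall q (ε / 2) ⊆ V := fun z hz => (hKsub (hcbK hz)).1
    refine ⟨(j', q, ε / 2, T'), ⟨by positivity, hqLj',
      hK.of_isClosed_subset Metric.isClosed_closedBall hcbK, fun k => ?_, fun k => le_max_right _ _⟩,
      ?_, ?_, hT'ge, ?_⟩
    · -- (n+1) + 1 ≤ T' k
      have := hT1 k
      have := hT'ge k
      push_cast
      linarith
    · -- nesting
      exact fun z hz => Metric.ball_subset_closedBall (hcbV hz).1
    · -- avoid R n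
      exact fun z hz => (hKsub (hcbK hz)).2
    · -- distance bounds
      intro k hk z hz
      have : z ∈ ⋂ k ∈ Finset.range (n + 1), {z | d k (σ k j) (φ k z) < f k (T' k)} :=
      (hcbV hz).2
      exact (Set.mem_iInter₂.1 this k (Finset.mem_range.2 (Nat.lt_succ_of_le hk))).le
  obtain ⟨F, hF0, hFP, hFQ⟩ :=
    abstract_khintchine_depChoice
      (P := fun n (st : ℕ × Y × ℝ × (ℕ → ℝ)) =>
        0 < st.2.2.1 ∧ st.2.1 ∈ L st.1 ∧ IsCompact (Metric.closedBall st.2.1 st.2.2.1) ∧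
        (∀ k, (n : ℝ) + 1 ≤ st.2.2.2 k) ∧ (∀ k, h k (σ k st.1) ≤ st.2.2.2 k))
      (Q := fun n (st st' : ℕ × Y × ℝ × (ℕ → ℝ)) =>
        Metric.closedBall st'.2.1 st'.2.2.1 ⊆ Metric.closedBall st.2.1 st.2.2.1 ∧
        (∀ z ∈ Metric.closedBall st'.2.1 st'.2.2.1, z ∉ R n) ∧
        (∀ k, st.2.2.2 k + 1 ≤ st'.2.2.2 k) ∧
        (∀ k ≤ n, ∀ z ∈ Metric.closedBall st'.2.1 st'.2.2.1,
          d k (σ k st.1) (φ k z) ≤ f k (st'.2.2.2 k)))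
      (a0 := (j0, y0, ε0 / 2, fun k => max 1 (h k (σ k j0))))
      (h0 := by
        refine ⟨by positivity, hy0L, hK0.of_isClosed_subset Metric.isClosed_closedBall hcb0K,
          fun k => ?_, fun k => le_max_right _ _⟩
        simpa using le_max_left 1 (h k (σ k j0)))
      (step := hstep)
  -- assemble the final point from the nested balls
  set B : ℕ → Set Y := fun n => Metric.closedBall (F n).2.1 (F n).2.2.1 with hB
  have hBsub : ∀ n, B (n + 1) ⊆ B n := fun n => (hFQ n).1
  have hBne : ∀ n, (B n).Nonempty :=
    fun n => ⟨(F n).2.1, Metric.mem_closedBall_self (hFP n).1.le⟩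
  have hBcl : ∀ n, IsClosed (B n) := fun n => Metric.isClosed_closedBall
  obtain ⟨y, hy⟩ := IsCompact.nonempty_iInter_of_sequence_nonempty_isCompact_isClosed
    B hBsub hBne (hFP 0).2.2.1 hBcl
  have hyB : ∀ n, y ∈ B n := fun n => Set.mem_iInter.1 hy n
  have hBanti : ∀ {m n : ℕ}, m ≤ n → B n ⊆ B m := by
    intro m n hmn
    induction hmn with
    | refl => exact le_refl _
    | step _ ih => exact (hBsub _).trans ih
  refine ⟨y, ?_, ?_, ?_⟩
  · -- y ∈ U
    have h00 : B 0 = Metric.closedBall y0 (ε0 / 2) := by simp only [hB, hF0]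
    exact hK0U (hcb0K (h00 ▸ hyB 0))
  · -- y avoids all R ℓ
    intro hmem
    obtain ⟨_, ⟨ℓ, rfl⟩, hyR⟩ := hmem
    exact (hFQ ℓ).2.1 y (hyB (ℓ + 1)) hyR
  · -- uniformity for each k
    intro k
    set u : ℕ → ℝ := fun n => (F n).2.2.2 k with hu
    have humono : Monotone u := monotone_nat_of_le_succ fun n => by
      have := (hFQ n).2.2.1 k; dsimp [u]; linarith
    refine ⟨u k, lt_of_lt_of_le (by positivity) ((hFP k).2.2.2.1 k), fun t ht => ?_⟩
    have htpos : 0 < t := lt_of_lt_of_le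
      (lt_of_lt_of_le (by positivity) ((hFP k).2.2.2.1 k)) ht
    -- the sequence u is unbounded
    have hbig : t < u (⌈t⌉₊) := by
      have h1 : (⌈t⌉₊ : ℝ) + 1 ≤ u ⌈t⌉₊ := (hFP ⌈t⌉₊).2.2.2.1 k
      have h2 : t ≤ (⌈t⌉₊ : ℝ) := Nat.le_ceil t
      linarith
    obtain ⟨n, hkn, hunt, htun⟩ :=
      abstract_khintchine_cross u humono k t ht ⌈t⌉₊ hbig
    refine ⟨σ k (F n).1, ?_, ?_⟩
    · calc d k (σ k (F n).1) (φ k y) ≤ f k (u (n + 1)) :=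
            (hFQ n).2.2.2 k hkn y (hyB (n + 1))
        _ ≤ f k t := hf_mono k t (u (n + 1)) htpos htun.le
    · exact le_trans ((hFP n).2.2.2.2 k) hunt
end
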